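/- arXiv:1406.6637 — 3 statements merged into one kernel-verified Lean document; each statement's English description precedes it below -/
import Mathlib

section
/- Let f ∈ ℝ[x_1,…,x_N] be an irreducible polynomial which changes sign, i.e. takes both strictly positive and strictly negative values on ℝ^N. Then the ideal of all polynomials vanishing on the real zero set V(f) = {x ∈ ℝ^N : f(x) = 0} is the principal ideal generated by f; that is, every g ∈ ℝ[x_1,…,x_N] vanishing identically on V(f) is divisible by f. -/
/-!  Common definitions: real algebraic sets, semialgebraic and Nash maps, arc spaces and
jet spaces, blowings-up with non-singular centers, blow-Nash maps, arc-analytic maps,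
`AS`-constructible sets, normal crossing presentations of critical loci and the
Jacobian hypothesis. -/

open MvPolynomial Topology Filter

noncomputable section

/-! ### Algebraic sets, vanishing ideals, dimension -/

/-- The common zero set in `ℝ^N` of a set of polynomials. -/
def zeroSet {N : ℕ} (S : Set (MvPolynomial (Fin N) ℝ)) : Set (Fin N → ℝ) :=
  {x | ∀ p ∈ S, eval x p = 0}

/-- A subset of `ℝ^N` is algebraic if it is the zero set of a family of polynomials. -/
def IsAlgebraicSet {N : ℕ} (X : Set (Fin N → ℝ)) : Prop :=
  ∃ S : Set (MvPolynomial (Fin N) ℝ), X = zeroSet S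

/-- The ideal `I(X)` of polynomials vanishing identically on `X ⊆ ℝ^N`. -/
def idealOfSet {N : ℕ} (X : Set (Fin N → ℝ)) : Ideal (MvPolynomial (Fin N) ℝ) where
  carrier := {p | ∀ x ∈ X, eval x p = 0}
  add_mem' := fun ha hb x hx => by simp [map_add, ha x hx, hb x hx]
  zero_mem' := fun x _ => by simp
  smul_mem' := fun c p hp x hx => by simp [smul_eq_mul, hp x hx]

/-- The Zariski closure of a subset of `ℝ^N`. -/
def zariskiClosure {N : ℕ} (S : Set (Fin N → ℝ)) : Set (Fin N → ℝ) :=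
  zeroSet (idealOfSet S : Set (MvPolynomial (Fin N) ℝ))

/-- The dimension of a subset of `ℝ^N`, defined (following Bochnak–Coste–Roy) as the Krull
dimension of its ring of polynomial functions. -/
def setDim {N : ℕ} (X : Set (Fin N → ℝ)) : WithBot ℕ∞ :=
  ringKrullDim (MvPolynomial (Fin N) ℝ ⧸ idealOfSet X)

/-! ### Semialgebraic sets and maps -/

/-- Semialgebraic subsets of `ℝ^n`: the boolean algebra generated by the sets defined by
polynomial sign conditions. -/
inductive IsSemialgebraic : {n : ℕ} → Set (Fin n → ℝ) → Prop
  | pos {n : ℕ} (p : MvPolynomial (Fin n) ℝ) : IsSemialgebraic {x | 0 < eval x p}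
  | zero {n : ℕ} (p : MvPolynomial (Fin n) ℝ) : IsSemialgebraic {x | eval x p = 0}
  | union {n : ℕ} {s t : Set (Fin n → ℝ)} :
      IsSemialgebraic s → IsSemialgebraic t → IsSemialgebraic (s ∪ t)
  | compl {n : ℕ} {s : Set (Fin n → ℝ)} : IsSemialgebraic s → IsSemialgebraic sᶜ

/-- The first `a` coordinates of a point of `ℝ^(a+b)`. -/
def front {a b : ℕ} (z : Fin (a + b) → ℝ) : Fin a → ℝ := fun i => z (Fin.castAdd b i)

/-- The last `b` coordinates of a point of `ℝ^(a+b)`. -/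
def back {a b : ℕ} (z : Fin (a + b) → ℝ) : Fin b → ℝ := fun j => z (Fin.natAdd a j)

/-- The graph of `f` over `X`, as a subset of `ℝ^(a+b)`. -/
def graphSet {a b : ℕ} (X : Set (Fin a → ℝ)) (f : (Fin a → ℝ) → Fin b → ℝ) :
    Set (Fin (a + b) → ℝ) :=
  {z | front z ∈ X ∧ back z = f (front z)}

/-- A map defined on `X ⊆ ℝ^a` with values in `ℝ^b` is semialgebraic if its graph is a
semialgebraic set. -/
def IsSemialgebraicMapOn {a b : ℕ} (f : (Fin a → ℝ) → Fin b → ℝ) (X : Set (Fin a → ℝ)) :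
    Prop :=
  IsSemialgebraic (graphSet X f)

/-- The graph over `D ⊆ ℝ` of an arc `γ : ℝ → ℝ^b`, as a subset of `ℝ^(1+b)`. -/
def arcGraph {b : ℕ} (γ : ℝ → Fin b → ℝ) (D : Set ℝ) : Set (Fin (1 + b) → ℝ) :=
  {z | front z 0 ∈ D ∧ back z = γ (front z 0)}

/-- An arc `γ : D → ℝ^b` is semialgebraic if its graph is a semialgebraic set. -/
def IsSemialgebraicArc {b : ℕ} (γ : ℝ → Fin b → ℝ) (D : Set ℝ) : Prop :=
  IsSemialgebraic (arcGraph γ D)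

/-- `f` is proper as a map from `X` to `Y`: preimages in `X` of compact subsets of `Y`
are compact. -/
def IsProperOn {a b : ℕ} (f : (Fin a → ℝ) → Fin b → ℝ) (X : Set (Fin a → ℝ))
    (Y : Set (Fin b → ℝ)) : Prop :=
  ∀ K ⊆ Y, IsCompact K → IsCompact (X ∩ f ⁻¹' K)

/-! ### Analytic and Nash maps on sets -/

/-- `g` is (real) analytic on the (possibly non-open) set `S`: around each point of `S` it
extends to an analytic map on an open ambient neighborhood. -/
def AnalyticOnSet {a b : ℕ} (g : (Fin a → ℝ) → Fin b → ℝ) (S : Set (Fin a → ℝ)) : Prop :=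
  ∀ x ∈ S, ∃ U : Set (Fin a → ℝ), IsOpen U ∧ x ∈ U ∧
    ∃ G : (Fin a → ℝ) → Fin b → ℝ, AnalyticOnNhd ℝ G U ∧ Set.EqOn G g (U ∩ S)

/-- A Nash map on `S`: semialgebraic and real analytic. -/
def IsNashMapOn {a b : ℕ} (g : (Fin a → ℝ) → Fin b → ℝ) (S : Set (Fin a → ℝ)) : Prop :=
  IsSemialgebraicMapOn g S ∧ AnalyticOnSet g S

/-- `f(t) ≢ 0 mod t^(e+1)`: some Taylor coefficient of `f` at `0` of order `≤ e` is
nonzero. -/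
def notDivTpow (f : ℝ → ℝ) (e : ℕ) : Prop :=
  ∃ m ≤ e, iteratedDeriv m f 0 ≠ 0

/-- The order of vanishing at `0 ∈ ℝ` of a function `f : ℝ → ℝ` (in `ℕ∞`; it is `⊤` when all
the Taylor coefficients at `0` vanish). -/
def ordAt (f : ℝ → ℝ) : ℕ∞ :=
  ⨅ m ∈ {m : ℕ | iteratedDeriv m f 0 ≠ 0}, (m : ℕ∞)

/-- Two germs of curves in `ℝ^q` agree modulo `t^(n+1)`: their Taylor coefficients at `0`
agree up to order `n`. -/
def CongMod {q : ℕ} (f g : ℝ → Fin q → ℝ) (n : ℕ) : Prop :=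
  ∀ j : Fin q, ∀ m ≤ n,
    iteratedDeriv m (fun t => f t j) 0 = iteratedDeriv m (fun t => g t j) 0

/-! ### Non-singular points and local analytic charts -/

/-- `x` is a non-singular point of the algebraic set `X ⊆ ℝ^N` of dimension `d`:
there are `N - d` polynomials vanishing on `X`, with linearly independent gradients at `x`,
which define `X` in a neighborhood of `x` (cf. Bochnak–Coste–Roy, Prop. 3.3.10). -/
def IsNonsingularAt {N : ℕ} (X : Set (Fin N → ℝ)) (d : ℕ) (x : Fin N → ℝ) : Prop :=
  x ∈ X ∧ d ≤ N ∧
  ∃ p : Fin (N - d) → MvPolynomial (Fin N) ℝ,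
    (∀ i, p i ∈ idealOfSet X) ∧
    LinearIndependent ℝ (fun i => (fun j => eval x (pderiv j (p i)) : Fin N → ℝ)) ∧
    ∃ U : Set (Fin N → ℝ), IsOpen U ∧ x ∈ U ∧
      X ∩ U = {y | ∀ i, eval y (p i) = 0} ∩ U

/-- A set is non-singular if each of its points is a non-singular point (in some
dimension). -/
def IsNonsingularSet {N : ℕ} (X : Set (Fin N → ℝ)) : Prop :=
  ∀ x ∈ X, ∃ d, IsNonsingularAt X d x

/-- The singular locus of a `d`-dimensional algebraic set: the complement in `X` of the set
of points that are non-singular of dimension `d`. -/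
def singularLocus {N : ℕ} (X : Set (Fin N → ℝ)) (d : ℕ) : Set (Fin N → ℝ) :=
  {x ∈ X | ¬ IsNonsingularAt X d x}

/-- An analytic local parametrization (chart) of the `d`-dimensional set `M ⊆ ℝ^p`
at `x`. -/
def IsChartAt {p : ℕ} (M : Set (Fin p → ℝ)) (d : ℕ) (ψ : (Fin d → ℝ) → Fin p → ℝ)
    (x : Fin p → ℝ) : Prop :=
  ψ 0 = x ∧
  ∃ (V : Set (Fin d → ℝ)) (W : Set (Fin p → ℝ)),
    IsOpen V ∧ (0 : Fin d → ℝ) ∈ V ∧ IsOpen W ∧ x ∈ W ∧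
    AnalyticOnNhd ℝ ψ V ∧ Set.InjOn ψ V ∧ ψ '' V = M ∩ W ∧
    ∀ y ∈ V, Function.Injective (fderiv ℝ ψ y)

/-- The Jacobian matrix at `y` of a map `g : ℝ^d → ℝ^N`. -/
def jacMat {d N : ℕ} (g : (Fin d → ℝ) → Fin N → ℝ) (y : Fin d → ℝ) :
    Matrix (Fin N) (Fin d) ℝ :=
  Matrix.of fun i j => fderiv ℝ g y (Pi.single j 1) i

/-- The `d`-dimensional volume distortion `√(det (Aᵀ A))` of an `N × d` matrix `A`. -/
def gram {d N : ℕ} (A : Matrix (Fin N) (Fin d) ℝ) : ℝ :=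
  Real.sqrt (A.transpose * A).det

/-- The absolute Jacobian determinant of `f` along `X` is (defined and) `> c` wherever the
differential of `f` along `X` is defined: at every point `x ∈ X`, in every local analytic
chart `ψ` of `X` at `x` in which `f` is analytic, the `d`-volume distortion of
`d(f∘ψ)(0)` is greater than `c` times that of `dψ(0)`. -/
def JacDetGtOn {N : ℕ} (X : Set (Fin N → ℝ)) (f : (Fin N → ℝ) → Fin N → ℝ) (c : ℝ) :
    Prop :=
  ∀ x ∈ X, ∀ (d : ℕ) (ψ : (Fin d → ℝ) → Fin N → ℝ), IsChartAt X d ψ x →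
    AnalyticAt ℝ (fun y => f (ψ y)) 0 →
    c * gram (jacMat ψ 0) < gram (jacMat (fun y => f (ψ y)) 0)

/-! ### Arcs and jets -/

/-- The space of (germs at `0` of) real analytic arcs on `X ⊆ ℝ^N`: analytic maps
`γ : (ℝ,0) → ℝ^N` such that `f(γ(t)) = 0` (as a germ at `0`) for every `f ∈ I(X)`. -/
def arcSpace {N : ℕ} (X : Set (Fin N → ℝ)) : Set (ℝ → Fin N → ℝ) :=
  {γ | AnalyticAt ℝ γ 0 ∧ ∀ p ∈ idealOfSet X, ∀ᶠ t in 𝓝 (0 : ℝ), eval (γ t) p = 0}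

/-- The truncation of an arc to its `n`-jet: the Taylor coefficients at `0` up to order `n`
of each of the `N` coordinates, encoded as a point of `ℝ^((n+1)·N)`. -/
def arcTrunc (n : ℕ) {N : ℕ} (γ : ℝ → Fin N → ℝ) : Fin ((n + 1) * N) → ℝ :=
  fun m =>
    iteratedDeriv ((finProdFinEquiv.symm m).1 : ℕ) (fun t => γ t (finProdFinEquiv.symm m).2) 0
      / (Nat.factorial (finProdFinEquiv.symm m).1)

/-- The polynomial `γ_j(t)` of degree `≤ n` encoded by the `j`-th coordinate of an
`n`-jet. -/
def jetPoly {n N : ℕ} (a : Fin ((n + 1) * N) → ℝ) (j : Fin N) : Polynomial ℝ :=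
  ∑ i : Fin (n + 1), Polynomial.C (a (finProdFinEquiv (i, j))) * Polynomial.X ^ (i : ℕ)

/-- The space of `n`-jets on `X ⊆ ℝ^N`: jets `γ` on `ℝ^N` such that
`f(γ(t)) ≡ 0 mod t^(n+1)` for all `f ∈ I(X)`. -/
def jetSpace (n : ℕ) {N : ℕ} (X : Set (Fin N → ℝ)) : Set (Fin ((n + 1) * N) → ℝ) :=
  {a | ∀ p ∈ idealOfSet X, (Polynomial.X : Polynomial ℝ) ^ (n + 1) ∣ aeval (jetPoly a) p}

/-- Truncation of `m`-jets to `n`-jets (`n ≤ m`). -/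
def jetTrunc {N : ℕ} (m n : ℕ) (h : n ≤ m) (a : Fin ((m + 1) * N) → ℝ) :
    Fin ((n + 1) * N) → ℝ :=
  fun q =>
    a (finProdFinEquiv (Fin.castLE (by omega) (finProdFinEquiv.symm q).1,
        (finProdFinEquiv.symm q).2))

/-- The base point `γ(0)` of a jet. -/
def jetBase {n N : ℕ} (a : Fin ((n + 1) * N) → ℝ) : Fin N → ℝ :=
  fun j => a (finProdFinEquiv (0, j))

/-- The map induced on `n`-jets by a map `σ : ℝ^p → ℝ^N` (meaningful when `σ` is analytic at
the base point of the jet): compose `σ` with the polynomial arc of the jet and truncate. -/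
def jetMap (n : ℕ) {p N : ℕ} (σ : (Fin p → ℝ) → Fin N → ℝ) (a : Fin ((n + 1) * p) → ℝ) :
    Fin ((n + 1) * N) → ℝ :=
  arcTrunc n (fun t => σ (fun i => Polynomial.eval t (jetPoly a i)))

/-- The Zariski tangent space of `X ⊆ ℝ^N` at `x`: the kernel of the gradients at `x` of the
polynomials vanishing on `X`. -/
def zariskiTangent {N : ℕ} (X : Set (Fin N → ℝ)) (x : Fin N → ℝ) : Set (Fin N → ℝ) :=
  {v | ∀ p ∈ idealOfSet X, ∑ j, eval x (pderiv j p) * v j = 0}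

/-- The `(n+1)`-jet with all coefficients `0` except those of `t^(n+1)`, which are given
by `v`. -/
def jetTop {N : ℕ} (n : ℕ) (v : Fin N → ℝ) : Fin ((n + 1 + 1) * N) → ℝ :=
  fun m =>
    if ((finProdFinEquiv.symm m).1 : ℕ) = n + 1 then v (finProdFinEquiv.symm m).2 else 0

/-! ### Blowings-up with non-singular centers, blow-Nash maps -/

/-- The affine "projective coordinates" of the tuple `(g 0 x, …, g (k-1) x)`: the rank-one
projection matrix `g(x)·g(x)ᵀ/|g(x)|²`, flattened; this realizes the point
`[g 0 x : ⋯ : g (k-1) x] ∈ ℙ^(k-1)(ℝ)` inside `ℝ^(k·k)`. -/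
def projCoords {N k : ℕ} (g : Fin k → MvPolynomial (Fin N) ℝ) (x : Fin N → ℝ) :
    Fin (k * k) → ℝ :=
  fun m =>
    eval x (g (finProdFinEquiv.symm m).1) * eval x (g (finProdFinEquiv.symm m).2) /
      ∑ l, (eval x (g l)) ^ 2

/-- `IsBlowingUpSeq M σ X`: `σ : M → X` is a (possibly empty) finite composition of
blowings-up with non-singular centers.  A blowing-up of `M' ⊆ ℝ^(N')` along a non-singular
algebraic center `C ⊆ M'` whose ideal is generated by `g_1, …, g_k` is realized as the
Zariski closure of `{(x, [g(x)]) : x ∈ M' \ C} ⊆ ℝ^(N') × ℙ^(k-1)(ℝ) ⊆ ℝ^(N' + k·k)`,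
with the blowing-down map given by the projection to the first `N'` coordinates. -/
inductive IsBlowingUpSeq : {N' N : ℕ} → Set (Fin N' → ℝ) → ((Fin N' → ℝ) → Fin N → ℝ) →
    Set (Fin N → ℝ) → Prop
  | refl {N : ℕ} (X : Set (Fin N → ℝ)) : IsBlowingUpSeq X id X
  | step {N' N : ℕ} {M : Set (Fin N' → ℝ)} {τ : (Fin N' → ℝ) → Fin N → ℝ}
      {X : Set (Fin N → ℝ)} (k : ℕ) (C : Set (Fin N' → ℝ))
      (g : Fin k → MvPolynomial (Fin N') ℝ) :
      IsBlowingUpSeq M τ X →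
      IsAlgebraicSet C → C ⊆ M → IsNonsingularSet C →
      Ideal.span (Set.range g) = idealOfSet C →
      IsBlowingUpSeq
        (zariskiClosure ((fun x => Fin.append x (projCoords g x)) '' (M \ C)))
        (fun z => τ (front z)) X

/-- `f` is a blow-Nash map from `X ⊆ ℝ^a` to `ℝ^b`: it is semialgebraic and becomes Nash
after composition with some finite sequence of blowings-up with non-singular centers. -/
def IsBlowNash {a b : ℕ} (X : Set (Fin a → ℝ)) (f : (Fin a → ℝ) → Fin b → ℝ) : Prop :=
  IsSemialgebraicMapOn f X ∧
  ∃ (p : ℕ) (M : Set (Fin p → ℝ)) (σ : (Fin p → ℝ) → Fin a → ℝ),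
    IsBlowingUpSeq M σ X ∧ IsNashMapOn (fun z => f (σ z)) M

/-! ### Arc-analytic and generically arc-analytic maps -/

/-- `f : X → ℝ^b` is arc-analytic: it sends real analytic arcs in `X` to real analytic
arcs. -/
def IsArcAnalytic {a b : ℕ} (X : Set (Fin a → ℝ)) (f : (Fin a → ℝ) → Fin b → ℝ) : Prop :=
  ∀ ε : ℝ, 0 < ε → ∀ γ : ℝ → Fin a → ℝ,
    AnalyticOnNhd ℝ γ (Set.Ioo (-ε) ε) → (∀ t ∈ Set.Ioo (-ε) ε, γ t ∈ X) →
    AnalyticOnNhd ℝ (fun t => f (γ t)) (Set.Ioo (-ε) ε)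

/-- `f : X → ℝ^b` is generically arc-analytic in dimension `d = dim X`: there is an algebraic
subset `S ⊆ X` with `dim S < dim X` such that every real analytic arc in `X` not entirely
included in `S` is sent by `f` to a real analytic arc. -/
def IsGenericallyArcAnalytic {a b : ℕ} (d : ℕ) (X : Set (Fin a → ℝ))
    (f : (Fin a → ℝ) → Fin b → ℝ) : Prop :=
  ∃ S : Set (Fin a → ℝ), IsAlgebraicSet S ∧ S ⊆ X ∧ setDim S < ((d : ℕ∞) : WithBot ℕ∞) ∧
    ∀ ε : ℝ, 0 < ε → ∀ γ : ℝ → Fin a → ℝ,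
      AnalyticOnNhd ℝ γ (Set.Ioo (-ε) ε) → (∀ t ∈ Set.Ioo (-ε) ε, γ t ∈ X) →
      ¬ (∀ t ∈ Set.Ioo (-ε) ε, γ t ∈ S) →
      AnalyticOnNhd ℝ (fun t => f (γ t)) (Set.Ioo (-ε) ε)

/-! ### `AS` sets (arc-symmetric constructible sets) -/

/-- The point `[v] ∈ ℙ^n(ℝ)` realized as the projection matrix `v·vᵀ/|v|²` in
`ℝ^((n+1)(n+1))`. -/
def projPoint {n : ℕ} (v : Fin (n + 1) → ℝ) : Fin ((n + 1) * (n + 1)) → ℝ :=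
  fun m => v (finProdFinEquiv.symm m).1 * v (finProdFinEquiv.symm m).2 / ∑ l, v l ^ 2

/-- The real projective space `ℙ^n(ℝ)` realized as an algebraic subset of
`ℝ^((n+1)(n+1))`. -/
def projSpace (n : ℕ) : Set (Fin ((n + 1) * (n + 1)) → ℝ) :=
  {z | ∃ v : Fin (n + 1) → ℝ, v ≠ 0 ∧ z = projPoint v}

/-- The affine chart `ℝ^n → ℙ^n(ℝ)`, `x ↦ [1 : x]`. -/
def affineToProj {n : ℕ} (x : Fin n → ℝ) : Fin ((n + 1) * (n + 1)) → ℝ :=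
  projPoint (Fin.cons 1 x)

/-- `A` is arc-symmetric in `P`: every analytic arc `γ : (-1,1) → P` with `γ((-1,0)) ⊆ A`
stays in `A` for small positive times. -/
def IsArcSymmetricIn {q : ℕ} (P A : Set (Fin q → ℝ)) : Prop :=
  ∀ γ : ℝ → Fin q → ℝ, AnalyticOnNhd ℝ γ (Set.Ioo (-1 : ℝ) 1) →
    (∀ t ∈ Set.Ioo (-1 : ℝ) 1, γ t ∈ P) → (∀ t ∈ Set.Ioo (-1 : ℝ) 0, γ t ∈ A) →
    ∃ ε > 0, ∀ t ∈ Set.Ioo (0 : ℝ) ε, γ t ∈ A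

/-- The boolean algebra of subsets of `ℙ^n(ℝ)` generated by the semialgebraic arc-symmetric
subsets. -/
inductive IsASSubsetOfProj (n : ℕ) : Set (Fin ((n + 1) * (n + 1)) → ℝ) → Prop
  | base {A} : IsSemialgebraic A → A ⊆ projSpace n → IsArcSymmetricIn (projSpace n) A →
      IsASSubsetOfProj n A
  | union {A B} : IsASSubsetOfProj n A → IsASSubsetOfProj n B → IsASSubsetOfProj n (A ∪ B)
  | diff {A B} : IsASSubsetOfProj n A → IsASSubsetOfProj n B → IsASSubsetOfProj n (A \ B)

/-- An `AS`(-constructible) subset of `ℝ^n`: the trace on the affine chart of an element of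
the boolean algebra generated by the semialgebraic arc-symmetric subsets of `ℙ^n(ℝ)`. -/
def IsASSet {n : ℕ} (A : Set (Fin n → ℝ)) : Prop :=
  ∃ B, IsASSubsetOfProj n B ∧ A = affineToProj ⁻¹' B

/-- A map defined on `S ⊆ ℝ^a` with values in `ℝ^b` is an `AS`(-constructible) map if its
graph is an `AS` set. -/
def IsASMapOn {a b : ℕ} (f : (Fin a → ℝ) → Fin b → ℝ) (S : Set (Fin a → ℝ)) : Prop :=
  IsASSet (graphSet S f)

/-! ### The ideal `H` cutting out the singular locus, the sets `L^(e)(X)` -/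

/-- The ideal generated by the `(N-d)`-minors of the Jacobian matrix `(∂f_i/∂x_j)` of a tuple
`f` of `N - d` polynomials in `N` variables. -/
def minorsIdeal {N : ℕ} (d : ℕ) (f : Fin (N - d) → MvPolynomial (Fin N) ℝ) :
    Ideal (MvPolynomial (Fin N) ℝ) :=
  Ideal.span {q | ∃ cols : Fin (N - d) → Fin N,
    q = (Matrix.of fun i k => pderiv (cols k) (f i)).det}

/-- The ideal `H = Σ_{f_1,…,f_(N-d) ∈ I(X)} Δ(f_1,…,f_(N-d))·((f_1,…,f_(N-d)) : I(X))`. -/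
def Hideal {N : ℕ} (d : ℕ) (X : Set (Fin N → ℝ)) : Ideal (MvPolynomial (Fin N) ℝ) :=
  ⨆ f : {f : Fin (N - d) → MvPolynomial (Fin N) ℝ // ∀ i, f i ∈ idealOfSet X},
    minorsIdeal d f.1 * Submodule.colon (Ideal.span (Set.range f.1)) (idealOfSet X)

/-- The set `L^(e)(X)` of arcs on `X` along which some element of `H` does not vanish modulo
`t^(e+1)`. -/
def LeSet {N : ℕ} (d e : ℕ) (X : Set (Fin N → ℝ)) : Set (ℝ → Fin N → ℝ) :=
  {γ ∈ arcSpace X | ∃ g ∈ Hideal d X, notDivTpow (fun t => eval (γ t) g) e}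

/-! ### Order of the Jacobian along arcs, the sets `Δ_(e,e')` -/

/-- `OrdJacEq M d σ γ e`: in a local analytic chart of the `d`-dimensional non-singular set
`M` at `γ(0)`, the minimal order of vanishing at `t = 0` along `γ` of the `d`-minors of the
Jacobian matrix of `σ` equals `e`. -/
def OrdJacEq {p N : ℕ} (M : Set (Fin p → ℝ)) (d : ℕ) (σ : (Fin p → ℝ) → Fin N → ℝ)
    (γ : ℝ → Fin p → ℝ) (e : ℕ∞) : Prop :=
  ∃ (ψ : (Fin d → ℝ) → Fin p → ℝ) (u : ℝ → Fin d → ℝ),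
    IsChartAt M d ψ (γ 0) ∧ AnalyticAt ℝ u 0 ∧ u 0 = 0 ∧
    (∀ᶠ t in 𝓝 (0 : ℝ), ψ (u t) = γ t) ∧
    (⨅ rows : Fin d → Fin N,
        ordAt fun t => ((jacMat (fun y => σ (ψ y)) (u t)).submatrix rows id).det) = e

/-- `σ : M → X` is generically one-to-one: injective away from a subset `S` of `X` with
`dim S < dim X`. -/
def GenericallyOneToOne {p N : ℕ} (M : Set (Fin p → ℝ)) (σ : (Fin p → ℝ) → Fin N → ℝ)
    (X : Set (Fin N → ℝ)) : Prop :=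
  ∃ S : Set (Fin N → ℝ), S ⊆ X ∧ setDim S < setDim X ∧ Set.InjOn σ (M \ σ ⁻¹' S)

/-- The set `Δ_(e,e')` of arcs `γ` on `M` with `ord_t Jac_σ(γ(t)) = e` and
`σ∘γ ∈ L^(e')(X)`; here `d = dim M` and `dX = dim X`. -/
def DeltaSet {p N : ℕ} (M : Set (Fin p → ℝ)) (d : ℕ) (σ : (Fin p → ℝ) → Fin N → ℝ)
    (X : Set (Fin N → ℝ)) (dX e e' : ℕ) : Set (ℝ → Fin p → ℝ) :=
  {γ ∈ arcSpace M | OrdJacEq M d σ γ (e : ℕ∞) ∧ (fun t => σ (γ t)) ∈ LeSet dX e' X}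

/-! ### Normal crossing presentations of critical loci -/

open Classical in
/-- The monomial `∏_(i : x ∈ E i) y(c i)^(ν i)` attached to the divisors through `x`. -/
def ncMonomial {p d : ℕ} {I : Type} [Fintype I] (E : I → Set (Fin p → ℝ)) (ν : I → ℕ)
    (c : I → Fin d) (x : Fin p → ℝ) (y : Fin d → ℝ) : ℝ :=
  ∏ i : I, if x ∈ E i then y (c i) ^ ν i else 1

/-- The critical locus of `σ` on the non-singular `d`-dimensional set `M` is the normal
crossing divisor `∑ ν_i E_i`: in suitable local analytic charts, each `E_i` through the base
point is a coordinate hyperplane and the ideal generated by the `d`-minors of the Jacobian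
matrix of `σ` is generated by the monomial `∏ y(c i)^(ν i)`. -/
def IsNCCrit {p N : ℕ} (M : Set (Fin p → ℝ)) (d : ℕ) (σ : (Fin p → ℝ) → Fin N → ℝ)
    {I : Type} [Fintype I] (E : I → Set (Fin p → ℝ)) (ν : I → ℕ) : Prop :=
  (∀ i, E i ⊆ M) ∧
  ∀ x ∈ M, ∃ ψ : (Fin d → ℝ) → Fin p → ℝ, IsChartAt M d ψ x ∧
    ∃ c : I → Fin d, Set.InjOn c {i | x ∈ E i} ∧
      (∀ i, x ∈ E i → ∀ᶠ y in 𝓝 (0 : Fin d → ℝ), (ψ y ∈ E i ↔ y (c i) = 0)) ∧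
      (∀ i, x ∉ E i → ∀ᶠ y in 𝓝 (0 : Fin d → ℝ), ψ y ∉ E i) ∧
      (∀ rows : Fin d → Fin N, ∃ h : (Fin d → ℝ) → ℝ, AnalyticAt ℝ h 0 ∧
        ∀ᶠ y in 𝓝 (0 : Fin d → ℝ),
          ((jacMat (fun z => σ (ψ z)) y).submatrix rows id).det
            = ncMonomial E ν c x y * h y) ∧
      ∃ a : (Fin d → Fin N) → (Fin d → ℝ) → ℝ, (∀ r, AnalyticAt ℝ (a r) 0) ∧
        ∀ᶠ y in 𝓝 (0 : Fin d → ℝ),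
          ncMonomial E ν c x y
            = ∑ r : Fin d → Fin N,
                a r y * ((jacMat (fun z => σ (ψ z)) y).submatrix r id).det

/-- The pullback `σ^(-1)(H)` of the ideal `H` by `σ` on the non-singular `d`-dimensional set
`M` is the normal crossing divisor `∑ λ_i E_i`: in suitable local analytic charts, each `E_i`
through the base point is a coordinate hyperplane and the ideal generated by the germs
`g∘σ`, `g ∈ H`, is generated by the monomial `∏ y(c i)^(λ i)`. -/
def IsNCPullback {p N : ℕ} (M : Set (Fin p → ℝ)) (d : ℕ) (σ : (Fin p → ℝ) → Fin N → ℝ)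
    (H : Ideal (MvPolynomial (Fin N) ℝ))
    {I : Type} [Fintype I] (E : I → Set (Fin p → ℝ)) (lam : I → ℕ) : Prop :=
  (∀ i, E i ⊆ M) ∧
  ∀ x ∈ M, ∃ ψ : (Fin d → ℝ) → Fin p → ℝ, IsChartAt M d ψ x ∧
    ∃ c : I → Fin d, Set.InjOn c {i | x ∈ E i} ∧
      (∀ i, x ∈ E i → ∀ᶠ y in 𝓝 (0 : Fin d → ℝ), (ψ y ∈ E i ↔ y (c i) = 0)) ∧
      (∀ i, x ∉ E i → ∀ᶠ y in 𝓝 (0 : Fin d → ℝ), ψ y ∉ E i) ∧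
      (∀ g ∈ H, ∃ h : (Fin d → ℝ) → ℝ, AnalyticAt ℝ h 0 ∧
        ∀ᶠ y in 𝓝 (0 : Fin d → ℝ),
          eval (σ (ψ y)) g = ncMonomial E lam c x y * h y) ∧
      ∃ (k : ℕ) (g : Fin k → MvPolynomial (Fin N) ℝ) (a : Fin k → (Fin d → ℝ) → ℝ),
        (∀ l, g l ∈ H) ∧ (∀ l, AnalyticAt ℝ (a l) 0) ∧
        ∀ᶠ y in 𝓝 (0 : Fin d → ℝ),
          ncMonomial E lam c x y = ∑ l, a l y * eval (σ (ψ y)) (g l)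

/-- `ord_γ E = j`: the order of vanishing along the arc `γ` of a local analytic equation of
the divisor `E ⊆ M` at `γ(0)`. -/
def OrdAlongDiv {p : ℕ} (M : Set (Fin p → ℝ)) (E : Set (Fin p → ℝ)) (γ : ℝ → Fin p → ℝ)
    (j : ℕ) : Prop :=
  ∃ (U : Set (Fin p → ℝ)) (f : (Fin p → ℝ) → ℝ), IsOpen U ∧ γ 0 ∈ U ∧
    AnalyticOnNhd ℝ f U ∧ E ∩ U = {x ∈ M ∩ U | f x = 0} ∧
    ordAt (fun t => f (γ t)) = (j : ℕ∞)

/-- The set `B_j` of arcs `γ` on `M` with `ord_γ E_i = j_i` for `i ∈ J = supp j` and origin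
`γ(0) ∈ E_J^∘ = ∩_(i ∈ J) E_i \ ∪_(i ∉ J) E_i`. -/
def Bset {p : ℕ} (M : Set (Fin p → ℝ)) {I : Type} [Fintype I] (E : I → Set (Fin p → ℝ))
    (j : I → ℕ) : Set (ℝ → Fin p → ℝ) :=
  {γ ∈ arcSpace M | (∀ i, j i ≠ 0 → γ 0 ∈ E i ∧ OrdAlongDiv M (E i) γ (j i)) ∧
    ∀ i, j i = 0 → γ 0 ∉ E i}

/-! ### The Jacobian hypothesis -/

/-- `f : X → X` (blow-Nash) satisfies the Jacobian hypothesis: for a sequence of blowings-up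
`σ : M → X` with non-singular centers such that `σ̃ = f∘σ` is Nash and the critical loci of
`σ` and `σ̃` are simultaneously normal crossing divisors `∑ ν_i E_i` and `∑ ν̃_i E_i`, one has
`ν_i ≥ ν̃_i` for all `i` (equivalently, the Jacobian ideal of `σ` is contained in the Jacobian
ideal of `σ̃`). -/
def SatisfiesJacHyp {N : ℕ} (X : Set (Fin N → ℝ))
    (f : (Fin N → ℝ) → Fin N → ℝ) : Prop :=
  ∃ (p d : ℕ) (M : Set (Fin p → ℝ)) (σ : (Fin p → ℝ) → Fin N → ℝ)
    (m : ℕ) (E : Fin m → Set (Fin p → ℝ)) (ν ν' : Fin m → ℕ),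
    IsBlowingUpSeq M σ X ∧ IsNashMapOn (fun z => f (σ z)) M ∧
    IsNCCrit M d σ E ν ∧ IsNCCrit M d (fun z => f (σ z)) E ν' ∧
    ∀ i, ν' i ≤ ν i

end

/-!
Write `f` and `g` as polynomials in `x₀` over `A = ℝ[x₁, …, x_{N-1}]`. If `f ∤ g`, then by
Gauss's lemma `f` and `g` are coprime over `Frac A`, so their resultant `r ∈ A` is nonzero, and
it is an `A[x₀]`-combination of `f` and `g`. After a linear change of coordinates the sign change
of `f` happens along the `x₀`-axis and, by continuity, persists over an open set of base points
`s`: `f(t₀, s) < 0 < f(t₁, s)`. By the intermediate value theorem each such fibre contains a zero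
of `f`, hence of `g`, hence `r(s) = 0`. A polynomial vanishing on an open set is zero.
-/

theorem Polynomial.dvd_of_resultant_eq_zero {R : Type*} [CommRing R] [IsDomain R] [IsGCDMonoid R]
    {F G : Polynomial R} (hF : Irreducible F) (hdeg : F.natDegree ≠ 0)
    (hres : F.resultant G = 0) : F ∣ G := by
  let K := FractionRing R
  have hinj : Function.Injective (algebraMap R K) := IsFractionRing.injective R K
  have hprim : F.IsPrimitive := hF.isPrimitive hdeg
  have hFK : Irreducible (F.map (algebraMap R K)) :=
    hprim.irreducible_iff_irreducible_map_fraction_map.mp hF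
  have hresK : (F.map (algebraMap R K)).resultant (G.map (algebraMap R K)) = 0 := by
    simp [resultant_map_map, natDegree_map_eq_of_injective hinj, hres]
  have hcop := (resultant_eq_zero_iff.mp hresK).2
  exact hprim.dvd_of_fraction_map_dvd_fraction_map
    (not_not.mp fun h => hcop (hFK.coprime_iff_not_dvd.mpr h))

namespace MvPolynomial

variable {R σ : Type*} [CommRing R]

theorem eq_zero_of_eval_eq_zero_of_mem_nhds [IsDomain R] [TopologicalSpace R] [T1Space R]
    [∀ r : R, (𝓝[≠] r).NeBot] {p : MvPolynomial σ R} {x₀ : σ → R} {U : Set (σ → R)}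
    (hU : U ∈ 𝓝 x₀) (hp : ∀ x ∈ U, eval x p = 0) : p = 0 := by
  rw [nhds_pi, Filter.mem_pi] at hU
  obtain ⟨I, -, t, ht, htU⟩ := hU
  exact funext_set t (fun i => infinite_of_mem_nhds (x₀ i) (ht i))
    fun x hx => by simpa using hp x (htU fun i _ => hx i trivial)

section LinearChangeOfVariables

variable [Fintype σ] [DecidableEq σ]

noncomputable def precompLinearMap (L : (σ → R) →ₗ[R] σ → R) :
    MvPolynomial σ R →ₐ[R] MvPolynomial σ R :=
  aeval fun i => ∑ j, C (L (Pi.single j 1) i) * X j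

theorem eval_precompLinearMap (L : (σ → R) →ₗ[R] σ → R) (x : σ → R) (p : MvPolynomial σ R) :
    eval x (precompLinearMap L p) = eval (L x) p := by
  have hL : L x = fun i => eval x (∑ j, C (L (Pi.single j 1) i) * X j) := by
    conv_lhs => rw [← Finset.univ_sum_single x]
    ext i
    simp only [map_sum, eval_mul, eval_C, eval_X, Finset.sum_apply]
    refine Finset.sum_congr rfl fun j _ => ?_
    rw [← mul_one (x j), ← smul_eq_mul, Pi.single_smul', map_smul]
    simp [mul_comm]
  rw [hL, precompLinearMap]
  simpa only [AlgHom.comp_apply, aeval_eq_eval] using AlgHom.congr_fun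
    (comp_aeval (f := fun i => ∑ j, C (L (Pi.single j 1) i) * X j) (aeval x)) p

variable [IsDomain R] [Infinite R]

noncomputable def precompLinearEquiv (L : (σ → R) ≃ₗ[R] σ → R) :
    MvPolynomial σ R ≃ₐ[R] MvPolynomial σ R :=
  AlgEquiv.ofAlgHom (precompLinearMap L) (precompLinearMap L.symm)
    (AlgHom.ext fun p => funext fun x => by simp [eval_precompLinearMap])
    (AlgHom.ext fun p => funext fun x => by simp [eval_precompLinearMap])

theorem eval_precompLinearEquiv (L : (σ → R) ≃ₗ[R] σ → R) (x : σ → R) (p : MvPolynomial σ R) :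
    eval x (precompLinearEquiv L p) = eval (L x) p :=
  eval_precompLinearMap (L : (σ → R) →ₗ[R] σ → R) x p

end LinearChangeOfVariables

section FinSucc

variable {n : ℕ}

theorem natDegree_finSuccEquiv_ne_zero {f : MvPolynomial (Fin (n + 1)) R} {s : Fin n → R}
    {t₀ t₁ : R} (h : eval (Fin.cons t₀ s) f ≠ eval (Fin.cons t₁ s) f) :
    (finSuccEquiv R n f).natDegree ≠ 0 := by
  intro h0
  obtain ⟨r, hr⟩ := Polynomial.natDegree_eq_zero.mp h0
  simp [eval_eq_eval_mv_eval', ← hr] at h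

theorem eval_resultant_finSuccEquiv_eq_zero {f g : MvPolynomial (Fin (n + 1)) R}
    (hf : (finSuccEquiv R n f).natDegree ≠ 0) {t : R} {s : Fin n → R}
    (hft : eval (Fin.cons t s) f = 0) (hgt : eval (Fin.cons t s) g = 0) :
    eval s ((finSuccEquiv R n f).resultant (finSuccEquiv R n g)) = 0 := by
  obtain ⟨p, q, -, -, hpq⟩ := Polynomial.exists_mul_add_mul_eq_C_resultant
    (finSuccEquiv R n f) (finSuccEquiv R n g) le_rfl le_rfl (Or.inl hf)
  have := congrArg (fun P => (P.map (eval s)).eval t) hpq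
  simp only [Polynomial.map_add, Polynomial.map_mul, Polynomial.eval_add, Polynomial.eval_mul,
    Polynomial.map_C, Polynomial.eval_C, ← eval_eq_eval_mv_eval', hft, hgt] at this
  simpa using this.symm

theorem resultant_finSuccEquiv_eq_zero {f g : MvPolynomial (Fin (n + 1)) ℝ} {s₀ : Fin n → ℝ}
    {t₀ t₁ : ℝ} (h₀ : eval (Fin.cons t₀ s₀) f < 0) (h₁ : 0 < eval (Fin.cons t₁ s₀) f)
    (hg : ∀ x, eval x f = 0 → eval x g = 0) :
    (finSuccEquiv ℝ n f).resultant (finSuccEquiv ℝ n g) = 0 := by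
  have hdeg := natDegree_finSuccEquiv_ne_zero (h₀.trans h₁).ne
  have hcont : ∀ t, Continuous fun s : Fin n → ℝ => eval (Fin.cons t s) f := fun t =>
    (continuous_eval f).comp (Continuous.finCons (A := fun _ => ℝ) continuous_const continuous_id)
  have hU : {s | eval (Fin.cons t₀ s) f < 0 ∧ 0 < eval (Fin.cons t₁ s) f} ∈ 𝓝 s₀ :=
    ((isOpen_lt (hcont t₀) continuous_const).inter
      (isOpen_lt continuous_const (hcont t₁))).mem_nhds ⟨h₀, h₁⟩
  refine eq_zero_of_eval_eq_zero_of_mem_nhds hU fun s ⟨hs₀, hs₁⟩ => ?_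
  have hline : Continuous fun t : ℝ => eval (Fin.cons t s) f :=
    (continuous_eval f).comp (Continuous.finCons (A := fun _ => ℝ) continuous_id continuous_const)
  obtain ⟨t, -, ht⟩ := intermediate_value_uIcc hline.continuousOn
    (Set.mem_uIcc.mpr (Or.inl ⟨hs₀.le, hs₁.le⟩))
  exact eval_resultant_finSuccEquiv_eq_zero hdeg ht (hg _ ht)

theorem dvd_of_signChange_fin_cons {f g : MvPolynomial (Fin (n + 1)) ℝ} (hf : Irreducible f)
    {s₀ : Fin n → ℝ} {t₀ t₁ : ℝ} (h₀ : eval (Fin.cons t₀ s₀) f < 0)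
    (h₁ : 0 < eval (Fin.cons t₁ s₀) f) (hg : ∀ x, eval x f = 0 → eval x g = 0) : f ∣ g := by
  rw [← map_dvd_iff (finSuccEquiv ℝ n)]
  exact Polynomial.dvd_of_resultant_eq_zero ((MulEquiv.irreducible_iff _).mpr hf)
    (natDegree_finSuccEquiv_ne_zero (h₀.trans h₁).ne) (resultant_finSuccEquiv_eq_zero h₀ h₁ hg)

end FinSucc

theorem dvd_of_signChange {N : ℕ} {f g : MvPolynomial (Fin N) ℝ} (hf : Irreducible f)
    {a b : Fin N → ℝ} (ha : eval a f < 0) (hb : 0 < eval b f)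
    (hg : ∀ x, eval x f = 0 → eval x g = 0) : f ∣ g := by
  cases N with
  | zero => exact absurd (Subsingleton.elim a b ▸ ha) hb.not_gt
  | succ n =>
    have hab : b - a ≠ 0 := sub_ne_zero.mpr fun h => (ha.trans hb).ne (h ▸ rfl)
    obtain ⟨L, hL⟩ := SeparatingDual.exists_continuousLinearEquiv_apply_eq (R := ℝ)
      (Pi.single_ne_zero_iff.mpr one_ne_zero : (Pi.single 0 1 : Fin (n + 1) → ℝ) ≠ 0) hab
    let P := precompLinearEquiv L.toLinearEquiv
    have hP (x : Fin (n + 1) → ℝ) (p : MvPolynomial (Fin (n + 1)) ℝ) :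
        eval x (P p) = eval (L x) p :=
      eval_precompLinearEquiv _ x p
    have htail : Fin.tail (L.symm b) = Fin.tail (L.symm a) := by
      rw [show b = a + L (Pi.single 0 1) by rw [hL]; abel, map_add, L.symm_apply_apply]
      funext i
      simp [Fin.tail, Fin.succ_ne_zero]
    rw [← map_dvd_iff P]
    refine dvd_of_signChange_fin_cons ((MulEquiv.irreducible_iff P).mpr hf)
      (s₀ := Fin.tail (L.symm a)) (t₀ := L.symm a 0) (t₁ := L.symm b 0) ?_ ?_
      fun x hx => by rw [hP] at hx ⊢; exact hg _ hx
    · rwa [Fin.cons_self_tail, hP, L.apply_symm_apply]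
    · rwa [← htail, Fin.cons_self_tail, hP, L.apply_symm_apply]

end MvPolynomial

theorem idealOfSet_zeroSet_singleton_eq_span_iff {N : ℕ} (f : MvPolynomial (Fin N) ℝ) :
    idealOfSet (zeroSet {f}) = Ideal.span {f} ↔
      ∀ g : MvPolynomial (Fin N) ℝ, (∀ x, eval x f = 0 → eval x g = 0) → f ∣ g := by
  have hmem (g : MvPolynomial (Fin N) ℝ) :
      g ∈ idealOfSet (zeroSet {f}) ↔ ∀ x, eval x f = 0 → eval x g = 0 := by
    simp [idealOfSet, zeroSet]
  have hspan : Ideal.span {f} ≤ idealOfSet (zeroSet {f}) :=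
    Ideal.span_le.mpr <| Set.singleton_subset_iff.mpr <| (hmem f).mpr fun _ => id
  simp only [le_antisymm_iff, hspan, and_true, SetLike.le_def, hmem, Ideal.mem_span_singleton]

/-- If `f ∈ ℝ[x_1,…,x_N]` is an irreducible polynomial taking both strictly positive and
strictly negative values, then `I(V(f)) = (f)`: every polynomial vanishing identically on
the real zero set of `f` is divisible by `f`. -/
theorem idealOf_zeroSet_of_irreducible_sign_change {N : ℕ} (f : MvPolynomial (Fin N) ℝ)
    (hirr : Irreducible f)
    (hneg : ∃ x : Fin N → ℝ, MvPolynomial.eval x f < 0)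
    (hpos : ∃ x : Fin N → ℝ, 0 < MvPolynomial.eval x f) :
    idealOfSet (zeroSet {f}) = Ideal.span {f} ∧
    ∀ g : MvPolynomial (Fin N) ℝ,
      (∀ x : Fin N → ℝ, MvPolynomial.eval x f = 0 → MvPolynomial.eval x g = 0) → f ∣ g := by
  obtain ⟨a, ha⟩ := hneg
  obtain ⟨b, hb⟩ := hpos
  have hdvd : ∀ g : MvPolynomial (Fin N) ℝ, (∀ x, eval x f = 0 → eval x g = 0) → f ∣ g :=
    fun _ => dvd_of_signChange hirr ha hb
  exact ⟨(idealOfSet_zeroSet_singleton_eq_span_iff f).mpr hdvd, hdvd⟩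
end

section
/- Let X ⊂ ℝ^N be an algebraic subset and γ ∈ L_n(X) an n-jet on X. Then the fiber (π_n^{n+1})^{-1}(γ) of the truncation map π_n^{n+1} : L_{n+1}(X) → L_n(X) over γ is either empty or an affine space isomorphic to the Zariski tangent space of X at the point γ(0). -/
/-!  Common definitions: real algebraic sets, semialgebraic and Nash maps, arc spaces and
jet spaces, blowings-up with non-singular centers, blow-Nash maps, arc-analytic maps,
`AS`-constructible sets, normal crossing presentations of critical loci and the
Jacobian hypothesis. -/

open MvPolynomial Topology Filter

/-! If `a₀` lies in the fiber over `γ`, every other point of the fiber is `a₀ + t^(n+1) v` for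
some `v ∈ ℝ^N`. Modulo `t^(n+2)` the square of `t^(n+1)` vanishes, so the first-order Taylor
expansion is exact: `f(a₀ + t^(n+1) v) ≡ f(a₀) + t^(n+1) ∑ ∂_j f(a₀(t)) v_j`, and in the last term
`∂_j f(a₀(t))` may be replaced by its value at `t = 0`. Hence `a₀ + t^(n+1) v` is a jet on `X`
exactly when `∑ ∂_j f(γ(0)) v_j = 0` for every `f ∈ I(X)`. -/

namespace MvPolynomial

theorem aeval_add_sub_sum_pderiv_mem_sq {σ R S : Type*} [Fintype σ] [CommSemiring R]
    [CommRing S] [Algebra R S] {I : Ideal S} (x y : σ → S) (hy : ∀ j, y j ∈ I)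
    (p : MvPolynomial σ R) :
    aeval (x + y) p - aeval x p - ∑ j, aeval x (pderiv j p) * y j ∈ I ^ 2 := by
  classical
  induction p using MvPolynomial.induction_on with
  | C a => simp
  | add p q hp hq =>
    convert add_mem hp hq using 1
    simp only [map_add, add_mul, Finset.sum_add_distrib]
    ring
  | mul_X p i hp =>
    have hD : ∑ j, aeval x (pderiv j p) * y j ∈ I :=
      Ideal.sum_mem _ fun j _ => I.mul_mem_left _ (hy j)
    have hsum : ∑ j, aeval x (pderiv j (p * X i)) * y j
        = (∑ j, aeval x (pderiv j p) * y j) * x i + aeval x p * y i := by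
      simp only [Derivation.leibniz, smul_eq_mul, pderiv_X, Pi.single_apply, map_add, map_mul,
        aeval_X, add_mul, Finset.sum_add_distrib, Finset.sum_mul]
      simp only [apply_ite (aeval x), map_one, map_zero, mul_ite, mul_one, mul_zero, ite_mul,
        zero_mul, Finset.sum_ite_eq, Finset.mem_univ, if_true]
      rw [add_comm]
      exact congrArg₂ _ (Finset.sum_congr rfl fun _ _ => by ring) rfl
    rw [hsum, pow_two]
    convert add_mem (Ideal.mul_mem_right (x i + y i) _ (pow_two I ▸ hp))
      (Ideal.mul_mem_mul hD (hy i)) using 1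
    simp only [map_mul, aeval_X, Pi.add_apply]
    ring

theorem coeff_zero_aeval {σ R : Type*} [CommSemiring R] (q : σ → Polynomial R)
    (p : MvPolynomial σ R) : (aeval q p).coeff 0 = eval (fun j => (q j).coeff 0) p := by
  induction p using MvPolynomial.induction_on <;> simp [*, Polynomial.mul_coeff_zero]

end MvPolynomial

theorem Polynomial.X_pow_succ_dvd_C_mul_X_pow_iff {R : Type*} [CommRing R] [IsDomain R] {c : R}
    {k : ℕ} :
    (Polynomial.X : Polynomial R) ^ (k + 1) ∣ Polynomial.C c * Polynomial.X ^ k ↔ c = 0 := by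
  rw [pow_succ', mul_dvd_mul_iff_right (pow_ne_zero k Polynomial.X_ne_zero), Polynomial.X_dvd_iff,
    Polynomial.coeff_C_zero]

section Jets

variable {N : ℕ}

theorem jet_ext {m : ℕ} {a b : Fin ((m + 1) * N) → ℝ}
    (h : ∀ i j, a (finProdFinEquiv (i, j)) = b (finProdFinEquiv (i, j))) : a = b :=
  funext fun q => by
    simpa only [Prod.mk.eta, Equiv.apply_symm_apply] using
      h (finProdFinEquiv.symm q).1 (finProdFinEquiv.symm q).2

theorem jetTop_apply (n : ℕ) (v : Fin N → ℝ) (i : Fin (n + 1 + 1)) (j : Fin N) :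
    jetTop n v (finProdFinEquiv (i, j)) = if i = Fin.last (n + 1) then v j else 0 := by
  simp [jetTop, Fin.ext_iff]

theorem jetTrunc_apply (m n : ℕ) (h : n ≤ m) (a : Fin ((m + 1) * N) → ℝ) (i : Fin (n + 1))
    (j : Fin N) :
    jetTrunc m n h a (finProdFinEquiv (i, j))
      = a (finProdFinEquiv (Fin.castLE (by omega) i, j)) := by
  simp [jetTrunc]

theorem jetBase_jetTrunc (m n : ℕ) (h : n ≤ m) (a : Fin ((m + 1) * N) → ℝ) :
    jetBase (jetTrunc m n h a) = jetBase a :=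
  funext fun j => jetTrunc_apply m n h a 0 j

theorem jetTrunc_succ_eq_iff {n : ℕ} {a b : Fin ((n + 1 + 1) * N) → ℝ} :
    jetTrunc (n + 1) n n.le_succ a = jetTrunc (n + 1) n n.le_succ b ↔
      ∃ v, a = b + jetTop n v := by
  constructor
  · intro h
    refine ⟨fun j => a (finProdFinEquiv (Fin.last _, j)) - b (finProdFinEquiv (Fin.last _, j)),
      jet_ext fun i j => ?_⟩
    rcases Fin.eq_castSucc_or_eq_last i with ⟨i, rfl⟩ | rfl
    · have hi : Fin.castLE (Nat.le_succ _) i = i.castSucc := rfl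
      simpa [jetTrunc_apply, jetTop_apply, Fin.castSucc_ne_last, hi] using
        congrFun h (finProdFinEquiv (i, j))
    · simp [jetTop_apply]
  · rintro ⟨v, rfl⟩
    refine jet_ext fun i j => ?_
    simp [jetTrunc_apply, jetTop_apply, Fin.ext_iff, i.isLt.ne]

theorem jetPoly_add {n : ℕ} (a b : Fin ((n + 1) * N) → ℝ) (j : Fin N) :
    jetPoly (a + b) j = jetPoly a j + jetPoly b j := by
  simp only [jetPoly, Pi.add_apply, map_add, add_mul, Finset.sum_add_distrib]

theorem jetPoly_jetTop (n : ℕ) (v : Fin N → ℝ) (j : Fin N) :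
    jetPoly (jetTop n v) j = Polynomial.C (v j) * Polynomial.X ^ (n + 1) := by
  simp [jetPoly, Fin.sum_univ_castSucc, jetTop_apply, Fin.castSucc_ne_last]

theorem coeff_zero_jetPoly {n : ℕ} (a : Fin ((n + 1) * N) → ℝ) (j : Fin N) :
    (jetPoly a j).coeff 0 = jetBase a j := by
  simp [jetPoly, Polynomial.finsetSum_coeff, Fin.sum_univ_succ, jetBase]

theorem X_pow_dvd_aeval_jetPoly_add_jetTop_sub {n : ℕ} (a : Fin ((n + 1 + 1) * N) → ℝ)
    (v : Fin N → ℝ) (p : MvPolynomial (Fin N) ℝ) :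
    (Polynomial.X : Polynomial ℝ) ^ (n + 1 + 1) ∣
      aeval (jetPoly (a + jetTop n v)) p - aeval (jetPoly a) p
        - Polynomial.C (∑ j, eval (jetBase a) (pderiv j p) * v j) * Polynomial.X ^ (n + 1) := by
  set y : Fin N → Polynomial ℝ := fun j => Polynomial.C (v j) * Polynomial.X ^ (n + 1)
  have hsplit : jetPoly (a + jetTop n v) = jetPoly a + y :=
    funext fun j => by rw [jetPoly_add, jetPoly_jetTop, Pi.add_apply]
  have hsq : Polynomial.X ^ (n + 1 + 1) ∣ aeval (jetPoly a + y) p - aeval (jetPoly a) p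
      - ∑ j, aeval (jetPoly a) (pderiv j p) * y j := by
    have hy : ∀ j, y j ∈ Ideal.span {(Polynomial.X : Polynomial ℝ) ^ (n + 1)} :=
      fun j => Ideal.mem_span_singleton.2 (dvd_mul_left _ _)
    have := aeval_add_sub_sum_pderiv_mem_sq (jetPoly a) y hy p
    rw [Ideal.span_singleton_pow, Ideal.mem_span_singleton, ← pow_mul] at this
    exact (pow_dvd_pow Polynomial.X (by omega)).trans this
  have hbase : ∀ j, Polynomial.X ^ (n + 1 + 1) ∣ aeval (jetPoly a) (pderiv j p) * y j
      - Polynomial.C (eval (jetBase a) (pderiv j p) * v j) * Polynomial.X ^ (n + 1) := by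
    intro j
    have hX := Polynomial.X_dvd_sub_C (p := aeval (jetPoly a) (pderiv j p))
    simp only [coeff_zero_aeval, coeff_zero_jetPoly] at hX
    rw [pow_succ']
    convert mul_dvd_mul (hX.mul_right (Polynomial.C (v j))) (dvd_refl (Polynomial.X ^ (n + 1)))
      using 1
    simp only [y, Polynomial.C_mul]
    ring
  rw [hsplit]
  convert dvd_add hsq (Finset.dvd_sum fun j _ => hbase j) using 1
  rw [Finset.sum_sub_distrib, map_sum, Finset.sum_mul]
  ring

theorem add_jetTop_mem_jetSpace_iff {n : ℕ} {X : Set (Fin N → ℝ)}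
    {a : Fin ((n + 1 + 1) * N) → ℝ} (ha : a ∈ jetSpace (n + 1) X) (v : Fin N → ℝ) :
    a + jetTop n v ∈ jetSpace (n + 1) X ↔ v ∈ zariskiTangent X (jetBase a) := by
  refine forall₂_congr fun p hp => ?_
  rw [← Polynomial.X_pow_succ_dvd_C_mul_X_pow_iff (k := n + 1), ← dvd_sub_left (ha p hp),
    dvd_iff_dvd_of_dvd_sub (X_pow_dvd_aeval_jetPoly_add_jetTop_sub a v p)]

end Jets

theorem fiber_truncation_affine_general {N : ℕ} (X : Set (Fin N → ℝ))
    (n : ℕ) (γ : Fin ((n + 1) * N) → ℝ) :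
    (jetSpace (n + 1) X ∩ jetTrunc (n + 1) n (Nat.le_succ n) ⁻¹' {γ}) = ∅ ∨
    ∃ a₀ ∈ jetSpace (n + 1) X ∩ jetTrunc (n + 1) n (Nat.le_succ n) ⁻¹' {γ},
      jetSpace (n + 1) X ∩ jetTrunc (n + 1) n (Nat.le_succ n) ⁻¹' {γ}
        = (fun v => a₀ + jetTop n v) '' zariskiTangent X (jetBase γ) := by
  rcases Set.eq_empty_or_nonempty
      (jetSpace (n + 1) X ∩ jetTrunc (n + 1) n (Nat.le_succ n) ⁻¹' {γ}) with h | ⟨a₀, ha₀⟩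
  · exact Or.inl h
  obtain ⟨ha₀X, rfl : jetTrunc (n + 1) n _ a₀ = γ⟩ := ha₀
  refine Or.inr ⟨a₀, ⟨ha₀X, rfl⟩, Set.ext fun a => ?_⟩
  rw [jetBase_jetTrunc]
  constructor
  · rintro ⟨haX, hat : jetTrunc (n + 1) n _ a = _⟩
    obtain ⟨v, rfl⟩ := jetTrunc_succ_eq_iff.1 hat
    exact ⟨v, (add_jetTop_mem_jetSpace_iff ha₀X v).1 haX, rfl⟩
  · rintro ⟨v, hv, rfl⟩
    exact ⟨(add_jetTop_mem_jetSpace_iff ha₀X v).2 hv, jetTrunc_succ_eq_iff.2 ⟨v, rfl⟩⟩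

/-- For an algebraic subset `X ⊆ ℝ^N` and an `n`-jet `γ ∈ L_n(X)`, the fiber of the
truncation map `π_n^{n+1} : L_{n+1}(X) → L_n(X)` over `γ` is either empty or an affine space
isomorphic to (a translate of) the Zariski tangent space of `X` at `γ(0)`. -/
theorem fiber_truncation_affine {N : ℕ} (X : Set (Fin N → ℝ)) (hX : IsAlgebraicSet X)
    (n : ℕ) (γ : Fin ((n + 1) * N) → ℝ) (hγ : γ ∈ jetSpace n X) :
    (jetSpace (n + 1) X ∩ jetTrunc (n + 1) n (Nat.le_succ n) ⁻¹' {γ}) = ∅ ∨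
    ∃ a₀ ∈ jetSpace (n + 1) X ∩ jetTrunc (n + 1) n (Nat.le_succ n) ⁻¹' {γ},
      jetSpace (n + 1) X ∩ jetTrunc (n + 1) n (Nat.le_succ n) ⁻¹' {γ}
        = (fun v => a₀ + jetTop n v) '' zariskiTangent X (jetBase γ) :=
  fiber_truncation_affine_general X n γ
end

section
/- Let X be a d-dimensional algebraic subset of ℝ^N and e ∈ ℕ. Then the set L^{(e)}(X) is covered by finitely many sets of the form A_{h,δ} = {γ ∈ L(ℝ^N) : (hδ)(γ(t)) ≢ 0 mod t^{e+1}}, where δ is an (N−d)-minor of the Jacobian matrix (∂f_i/∂x_j) of some f_1,…,f_{N−d} ∈ I(X) and h ∈ ((f_1,…,f_{N−d}) : I(X)). Moreover, for each such A_{h,δ}, one has L(X) ∩ A_{h,δ} = {γ ∈ L(ℝ^N) : f_1(γ) = ⋯ = f_{N−d}(γ) = 0 and (hδ)(γ(t)) ≢ 0 mod t^{e+1}}. -/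
/-!  Common definitions: real algebraic sets, semialgebraic and Nash maps, arc spaces and
jet spaces, blowings-up with non-singular centers, blow-Nash maps, arc-analytic maps,
`AS`-constructible sets, normal crossing presentations of critical loci and the
Jacobian hypothesis. -/

open MvPolynomial Topology Filter

/-! The ideal `H` is generated by the products `h·δ`; the polynomial ring being Noetherian,
finitely many of them already generate it. Along an analytic arc `γ`, the polynomials `p` with
`p(γ(t)) ≡ 0 mod t^(e+1)` form an ideal (Leibniz rule), so an element of `H` that is nonzero
modulo `t^(e+1)` along `γ` forces one of these generators to be so as well.

For the equality, let `f_i(γ) = 0` and `(hδ)(γ) ≢ 0 mod t^(e+1)`, so that `h(γ) ≢ 0`. For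
`p ∈ I(X)` we have `h·p ∈ (f_1, …, f_(N-d))`, hence `h(γ)·p(γ) = 0`; since germs of analytic
functions form a domain, `p(γ) = 0`. -/

theorem AnalyticAt.eval_mvPolynomial_comp {𝕜 E σ : Type*} [NontriviallyNormedField 𝕜]
    [CompleteSpace 𝕜] [NormedAddCommGroup E] [NormedSpace 𝕜 E] [Fintype σ] {γ : E → σ → 𝕜}
    {z : E} (hγ : AnalyticAt 𝕜 γ z) (p : MvPolynomial σ 𝕜) :
    AnalyticAt 𝕜 (fun x => eval (γ x) p) z :=
  (AnalyticOnNhd.eval_mvPolynomial p (γ z) (Set.mem_univ _)).comp hγ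

theorem AnalyticAt.eventually_eq_zero_of_mul {𝕜 : Type*} [NontriviallyNormedField 𝕜]
    {f g : 𝕜 → 𝕜} {z : 𝕜} (hf : AnalyticAt 𝕜 f z) (hg : AnalyticAt 𝕜 g z)
    (hf_ne : ∃ᶠ t in 𝓝 z, f t ≠ 0) (hfg : ∀ᶠ t in 𝓝 z, f t * g t = 0) :
    ∀ᶠ t in 𝓝 z, g t = 0 := by
  have hf_top : analyticOrderAt f z ≠ ⊤ := by
    rw [Ne, analyticOrderAt_eq_top]
    exact fun hzero => hf_ne (hzero.mono fun _ ht => not_not.mpr ht)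
  have hfg_top : analyticOrderAt f z + analyticOrderAt g z = ⊤ := by
    rw [← analyticOrderAt_mul hf hg, analyticOrderAt_eq_top]
    exact hfg
  rw [← analyticOrderAt_eq_top]
  exact (WithTop.add_eq_top.mp hfg_top).resolve_left hf_top

theorem iteratedDeriv_mul_eq_zero {𝕜 𝔸 : Type*} [NontriviallyNormedField 𝕜] [NormedRing 𝔸]
    [NormedAlgebra 𝕜 𝔸] {f g : 𝕜 → 𝔸} {x : 𝕜} {n : ℕ} (hf : ContDiffAt 𝕜 n f x)
    (hg : ContDiffAt 𝕜 n g x) (hg_zero : ∀ m ≤ n, iteratedDeriv m g x = 0) :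
    iteratedDeriv n (fun t => f t * g t) x = 0 := by
  rw [← iteratedDerivWithin_univ, ← Pi.mul_def,
    iteratedDerivWithin_mul (Set.mem_univ x) uniqueDiffOn_univ hf.contDiffWithinAt
      hg.contDiffWithinAt]
  refine Finset.sum_eq_zero fun i _ => ?_
  simp only [iteratedDerivWithin_univ, hg_zero _ (Nat.sub_le n i), mul_zero]

theorem notDivTpow.frequently_ne_zero {f : ℝ → ℝ} {e : ℕ} (hf : notDivTpow f e) :
    ∃ᶠ t in 𝓝 0, f t ≠ 0 := by
  obtain ⟨m, -, hm⟩ := hf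
  refine fun hzero => hm ?_
  have hf_zero : f =ᶠ[𝓝 0] fun _ => 0 := hzero.mono fun t ht => not_not.mp ht
  rw [hf_zero.iteratedDeriv_eq, iteratedDeriv_const]
  simp

theorem eventually_eval_eq_zero_of_mem_span {R σ α : Type*} [CommSemiring R] {l : Filter α}
    {γ : α → σ → R} {S : Set (MvPolynomial σ R)} {g : MvPolynomial σ R}
    (hS : ∀ q ∈ S, ∀ᶠ t in l, eval (γ t) q = 0) (hg : g ∈ Ideal.span S) :
    ∀ᶠ t in l, eval (γ t) g = 0 := by
  induction hg using Submodule.span_induction with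
  | mem q hq => exact hS q hq
  | zero => simp
  | add p q _ _ hp hq => filter_upwards [hp, hq] with t hpt hqt; simp [hpt, hqt]
  | smul r p _ hp => filter_upwards [hp] with t hpt; simp [hpt]

theorem notDivTpow_eval_of_mem_span {σ : Type*} [Fintype σ] {γ : ℝ → σ → ℝ}
    (hγ : AnalyticAt ℝ γ 0) {S : Set (MvPolynomial σ ℝ)} {g : MvPolynomial σ ℝ} {e : ℕ}
    (hg : g ∈ Ideal.span S) (hg_ne : notDivTpow (fun t => eval (γ t) g) e) :
    ∃ q ∈ S, notDivTpow (fun t => eval (γ t) q) e := by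
  contrapose! hg_ne
  simp only [notDivTpow, not_exists, not_and, not_not] at hg_ne ⊢
  have hsmooth (p : MvPolynomial σ ℝ) (m : ℕ) : ContDiffAt ℝ m (fun t => eval (γ t) p) 0 :=
    (hγ.eval_mvPolynomial_comp p).contDiffAt
  induction hg using Submodule.span_induction with
  | mem q hq => exact hg_ne q hq
  | zero => simp
  | add p q _ _ hp hq =>
    intro m hm
    simp only [map_add]
    rw [iteratedDeriv_fun_add (hsmooth p m) (hsmooth q m), hp m hm, hq m hm, add_zero]
  | smul r p _ hp =>
    intro m hm
    simp only [smul_eq_mul, map_mul]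
    exact iteratedDeriv_mul_eq_zero (hsmooth r m) (hsmooth p m)
      fun k hk => hp k (hk.trans hm)

theorem Ideal.exists_fin_family_subset_span_eq {R : Type*} [CommRing R] [IsNoetherianRing R]
    (S : Set R) :
    ∃ (k : ℕ) (b : Fin k → R), Set.range b ⊆ S ∧ Ideal.span (Set.range b) = Ideal.span S := by
  obtain ⟨T, hTS, hspan⟩ :=
    (Submodule.fg_span_iff_fg_span_finset_subset S).mp (IsNoetherian.noetherian (Ideal.span S))
  have hrange : Set.range (fun l => (T.equivFin.symm l : R)) = T := by
    ext x
    refine ⟨fun ⟨l, hl⟩ => hl ▸ (T.equivFin.symm l).2, fun hx => ⟨T.equivFin ⟨x, hx⟩, by simp⟩⟩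
  exact ⟨T.card, fun l => T.equivFin.symm l, hrange ▸ hTS, hrange ▸ hspan.symm⟩

theorem mem_arcSpace_univ {N : ℕ} {γ : ℝ → Fin N → ℝ} :
    γ ∈ arcSpace (Set.univ : Set (Fin N → ℝ)) ↔ AnalyticAt ℝ γ 0 :=
  ⟨fun hγ => hγ.1, fun hγ => ⟨hγ, fun _ hp => Eventually.of_forall fun _ => hp _ trivial⟩⟩

section JacobianProducts

variable {N : ℕ} (d : ℕ) (X : Set (Fin N → ℝ))

def jacobianProducts : Set (MvPolynomial (Fin N) ℝ) :=
  {q | ∃ (F : Fin (N - d) → MvPolynomial (Fin N) ℝ) (h : MvPolynomial (Fin N) ℝ)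
      (cols : Fin (N - d) → Fin N), (∀ i, F i ∈ idealOfSet X) ∧
      h ∈ Submodule.colon (Ideal.span (Set.range F)) (idealOfSet X) ∧
      q = h * (Matrix.of fun i k => pderiv (cols k) (F i)).det}

theorem Hideal_le_span_jacobianProducts : Hideal d X ≤ Ideal.span (jacobianProducts d X) := by
  refine iSup_le fun F => ?_
  rw [minorsIdeal, ← Ideal.span_eq (Submodule.colon _ _), Ideal.span_mul_span']
  refine Ideal.span_mono ?_
  rintro _ ⟨δ, ⟨cols, rfl⟩, h, hh, rfl⟩
  exact ⟨F.1, h, cols, F.2, hh, mul_comm _ _⟩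

end JacobianProducts

theorem mem_arcSpace_of_mem_colon {N n : ℕ} {X : Set (Fin N → ℝ)} {γ : ℝ → Fin N → ℝ}
    (hγ : AnalyticAt ℝ γ 0) {F : Fin n → MvPolynomial (Fin N) ℝ}
    (hF : ∀ i, ∀ᶠ t in 𝓝 0, eval (γ t) (F i) = 0) {h : MvPolynomial (Fin N) ℝ}
    (hh : h ∈ Submodule.colon (Ideal.span (Set.range F)) (idealOfSet X))
    (hh_ne : ∃ᶠ t in 𝓝 0, eval (γ t) h ≠ 0) : γ ∈ arcSpace X := by
  refine ⟨hγ, fun p hp => ?_⟩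
  have hhp : h * p ∈ Ideal.span (Set.range F) := Submodule.mem_colon.mp hh p hp
  have hhp_zero := eventually_eval_eq_zero_of_mem_span (Set.forall_mem_range.2 hF) hhp
  simp only [map_mul] at hhp_zero
  exact (hγ.eval_mvPolynomial_comp h).eventually_eq_zero_of_mul
    (hγ.eval_mvPolynomial_comp p) hh_ne hhp_zero

theorem LeSet_covered_by_complete_intersections_general {N d : ℕ} (X : Set (Fin N → ℝ)) (e : ℕ) :
    (∃ (k : ℕ) (F : Fin k → (Fin (N - d) → MvPolynomial (Fin N) ℝ))
       (h : Fin k → MvPolynomial (Fin N) ℝ) (cols : Fin k → (Fin (N - d) → Fin N)),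
       (∀ l i, F l i ∈ idealOfSet X) ∧
       (∀ l, h l ∈ Submodule.colon (Ideal.span (Set.range (F l))) (idealOfSet X)) ∧
       LeSet d e X ⊆ ⋃ l : Fin k,
         {γ ∈ arcSpace (Set.univ : Set (Fin N → ℝ)) |
           notDivTpow (fun t => MvPolynomial.eval (γ t)
             (h l * (Matrix.of fun i k' => MvPolynomial.pderiv (cols l k') (F l i)).det)) e}) ∧
    (∀ (F : Fin (N - d) → MvPolynomial (Fin N) ℝ), (∀ i, F i ∈ idealOfSet X) →
      ∀ h ∈ Submodule.colon (Ideal.span (Set.range F)) (idealOfSet X),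
      ∀ cols : Fin (N - d) → Fin N,
        arcSpace X ∩
          {γ ∈ arcSpace (Set.univ : Set (Fin N → ℝ)) |
            notDivTpow (fun t => MvPolynomial.eval (γ t)
              (h * (Matrix.of fun i k' => MvPolynomial.pderiv (cols k') (F i)).det)) e}
        = {γ ∈ arcSpace (Set.univ : Set (Fin N → ℝ)) |
            (∀ i, ∀ᶠ t in nhds (0 : ℝ), MvPolynomial.eval (γ t) (F i) = 0) ∧
            notDivTpow (fun t => MvPolynomial.eval (γ t)
              (h * (Matrix.of fun i k' => MvPolynomial.pderiv (cols k') (F i)).det)) e}) := by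
  constructor
  · obtain ⟨k, b, hb_sub, hb_span⟩ :=
      Ideal.exists_fin_family_subset_span_eq (jacobianProducts d X)
    choose F h cols hF hh hb using fun l => hb_sub ⟨l, rfl⟩
    refine ⟨k, F, h, cols, hF, hh, ?_⟩
    rintro γ ⟨hγX, g, hgH, hg⟩
    have hg_span : g ∈ Ideal.span (Set.range b) :=
      hb_span ▸ Hideal_le_span_jacobianProducts d X hgH
    obtain ⟨_, ⟨l, rfl⟩, hl⟩ := notDivTpow_eval_of_mem_span hγX.1 hg_span hg
    exact Set.mem_iUnion.2 ⟨l, mem_arcSpace_univ.2 hγX.1, hb l ▸ hl⟩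
  · intro F hF h hh cols
    ext γ
    constructor
    · rintro ⟨hγX, hγ, hne⟩
      exact ⟨hγ, fun i => hγX.2 _ (hF i), hne⟩
    · rintro ⟨hγ, hFγ, hne⟩
      have hh_ne : ∃ᶠ t in 𝓝 0, eval (γ t) h ≠ 0 :=
        hne.frequently_ne_zero.mono fun t ht => by
          rw [map_mul] at ht
          exact left_ne_zero_of_mul ht
      exact ⟨mem_arcSpace_of_mem_colon hγ.1 hFγ hh hh_ne, hγ, hne⟩

/-- **Reduction to complete intersections.**  Let `X ⊆ ℝ^N` be algebraic of dimension `d`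
and `e ∈ ℕ`.  Then `L^(e)(X)` is covered by finitely many sets
`A_{h,δ} = {γ ∈ L(ℝ^N) : (hδ)(γ(t)) ≢ 0 mod t^(e+1)}` where `δ` is an `(N-d)`-minor of the
Jacobian matrix of some `f_1, …, f_{N-d} ∈ I(X)` and `h ∈ ((f_1,…,f_{N-d}) : I(X))`;
moreover for each such `A_{h,δ}`,
`L(X) ∩ A_{h,δ} = {γ ∈ L(ℝ^N) : f_1(γ) = ⋯ = f_{N-d}(γ) = 0, (hδ)(γ(t)) ≢ 0 mod t^(e+1)}`. -/
theorem LeSet_covered_by_complete_intersections {N d : ℕ} (X : Set (Fin N → ℝ))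
    (hX : IsAlgebraicSet X) (hdim : setDim X = ((d : ℕ∞) : WithBot ℕ∞)) (e : ℕ) :
    (∃ (k : ℕ) (F : Fin k → (Fin (N - d) → MvPolynomial (Fin N) ℝ))
       (h : Fin k → MvPolynomial (Fin N) ℝ) (cols : Fin k → (Fin (N - d) → Fin N)),
       (∀ l i, F l i ∈ idealOfSet X) ∧
       (∀ l, h l ∈ Submodule.colon (Ideal.span (Set.range (F l))) (idealOfSet X)) ∧
       LeSet d e X ⊆ ⋃ l : Fin k,
         {γ ∈ arcSpace (Set.univ : Set (Fin N → ℝ)) |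
           notDivTpow (fun t => MvPolynomial.eval (γ t)
             (h l * (Matrix.of fun i k' => MvPolynomial.pderiv (cols l k') (F l i)).det)) e}) ∧
    (∀ (F : Fin (N - d) → MvPolynomial (Fin N) ℝ), (∀ i, F i ∈ idealOfSet X) →
      ∀ h ∈ Submodule.colon (Ideal.span (Set.range F)) (idealOfSet X),
      ∀ cols : Fin (N - d) → Fin N,
        arcSpace X ∩
          {γ ∈ arcSpace (Set.univ : Set (Fin N → ℝ)) |
            notDivTpow (fun t => MvPolynomial.eval (γ t)
              (h * (Matrix.of fun i k' => MvPolynomial.pderiv (cols k') (F i)).det)) e}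
        = {γ ∈ arcSpace (Set.univ : Set (Fin N → ℝ)) |
            (∀ i, ∀ᶠ t in nhds (0 : ℝ), MvPolynomial.eval (γ t) (F i) = 0) ∧
            notDivTpow (fun t => MvPolynomial.eval (γ t)
              (h * (Matrix.of fun i k' => MvPolynomial.pderiv (cols k') (F i)).det)) e}) :=
  LeSet_covered_by_complete_intersections_general X e
end
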